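/- Let G ∈ ℝ^{N×N} be symmetric and suppose G has a (real) eigenvalue λ < 0. Fix t₀ > 0. Then for every δ > 0 there exists an initial condition (q(t₀), q'(t₀)) with ‖q(t₀)‖₂ + ‖q'(t₀)‖₂ < δ such that the trajectory of the NAGD game dynamics q''(t) + (3/t) q'(t) + G q(t) = 0 satisfies ‖q(t)‖₂ → ∞ exponentially: for every μ' < √(−λ), e^{-μ' t} ‖q(t)‖₂ → ∞ as t → ∞. -/

import Mathlib

/-!
Along an eigenvector `u` with `G u = λ u`, `λ = -c < 0`, the ansatz `q(t) = f(t) u` reduces the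
dynamics to the scalar equation `f'' + (3/t) f' = c f`. It is solved by the entire function
`f(t) = H₁(c t² / 4)`, where `Hₘ(y) = ∑ yᵏ / (k! (k+m)!)` satisfies `Hₘ' = Hₘ₊₁` and the Bessel
recurrence `y Hₘ₊₂ + (m+1) Hₘ₊₁ = Hₘ`. Comparing coefficients with the series of `cosh` via
`2 · 4ᵏ k! (k+1)! ≤ (2k+2)!` gives `c t² f(t) ≥ e^{√c t} - 2`, so `f` grows like `e^{√c t}` up to a
polynomial factor. Scaling `f u` by a small `ε > 0` makes the initial data as small as desired.
-/
open Filter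

/-- The Euclidean norm `‖x‖₂` of a vector `x ∈ ℝ^N`. -/
noncomputable def e2norm {N : ℕ} (x : Fin N → ℝ) : ℝ := Real.sqrt (∑ i, x i ^ 2)

/-- NAGD game dynamics: `q` is a twice continuously differentiable trajectory with
velocity `v = q'` satisfying `q'' + (3/t) q' + G q = 0` on `[t₀, ∞)`. -/
def IsNAGDTrajectory {N : ℕ} (G : Matrix (Fin N) (Fin N) ℝ) (t₀ : ℝ)
    (q v : ℝ → Fin N → ℝ) : Prop :=
  (∀ t, t₀ ≤ t → HasDerivAt q (v t) t) ∧
  (∀ t, t₀ ≤ t → HasDerivAt v (-(3 / t) • v t - G.mulVec (q t)) t)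

open Real
open scoped Nat

theorem Nat.two_mul_four_pow_mul_factorial_mul_factorial_succ_le (k : ℕ) :
    2 * 4 ^ k * k ! * (k + 1)! ≤ (2 * k + 2)! := by
  induction k with
  | zero => decide
  | succ k ih =>
    calc 2 * 4 ^ (k + 1) * (k + 1)! * (k + 1 + 1)!
        = 4 * (k + 1) * (k + 2) * (2 * 4 ^ k * k ! * (k + 1)!) := by
          simp only [Nat.factorial_succ]; ring
      _ ≤ (2 * k + 4) * (2 * k + 3) * (2 * k + 2)! := Nat.mul_le_mul (by nlinarith) ih
      _ = (2 * (k + 1) + 2)! := by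
          simp only [show 2 * (k + 1) + 2 = 2 * k + 2 + 1 + 1 by ring, Nat.factorial_succ]; ring

/-- `besselSeries m y = y^{-m/2} Iₘ(2√y)`, with `Iₘ` the modified Bessel function of the first
kind. -/
noncomputable def besselSeries (m : ℕ) (y : ℝ) : ℝ := ∑' k, y ^ k / (k ! * (k + m)!)

lemma factorial_le_factorial_mul_factorial (k n : ℕ) : (k ! : ℝ) ≤ k ! * n ! :=
  le_mul_of_one_le_right (by positivity) (by exact_mod_cast n.factorial_pos)

lemma hasSum_besselSeries (m : ℕ) (y : ℝ) :
    HasSum (fun k => y ^ k / (k ! * (k + m)! : ℝ)) (besselSeries m y) := by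
  refine (Summable.of_norm_bounded (Real.summable_pow_div_factorial |y|) fun k => ?_).hasSum
  rw [norm_div, norm_pow, Real.norm_eq_abs, Real.norm_of_nonneg (by positivity)]
  gcongr
  exact factorial_le_factorial_mul_factorial k _

lemma norm_natCast_mul_pow_pred_div_le {R x : ℝ} (hR : 1 ≤ R) (hx : |x| ≤ R) (m k : ℕ) :
    ‖k * x ^ (k - 1) / (k ! * (k + m)! : ℝ)‖ ≤ (2 * R) ^ k / k ! := by
  have hk : (k : ℝ) ≤ 2 ^ k := by exact_mod_cast Nat.lt_two_pow_self.le
  have hpow : |x| ^ (k - 1) ≤ R ^ k :=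
    (pow_le_pow_left₀ (abs_nonneg x) hx _).trans (pow_le_pow_right₀ hR (Nat.sub_le k 1))
  rw [norm_div, norm_mul, norm_pow, Real.norm_eq_abs, Real.norm_eq_abs, Nat.abs_cast,
    Real.norm_of_nonneg (by positivity), mul_pow]
  calc k * |x| ^ (k - 1) / (k ! * (k + m)!) ≤ 2 ^ k * R ^ k / (k ! * (k + m)!) := by gcongr
    _ ≤ 2 ^ k * R ^ k / k ! := by gcongr; exact factorial_le_factorial_mul_factorial k _

theorem hasDerivAt_besselSeries (m : ℕ) (y : ℝ) :
    HasDerivAt (besselSeries m) (besselSeries (m + 1) y) y := by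
  set R := |y| + 1
  have hR : 1 ≤ R := by simp [R]
  have hderiv := hasDerivAt_tsum_of_isPreconnected
    (g := fun k x => x ^ k / (k ! * (k + m)! : ℝ))
    (g' := fun k x => k * x ^ (k - 1) / (k ! * (k + m)! : ℝ))
    (Real.summable_pow_div_factorial (2 * R)) isOpen_Ioo (isPreconnected_Ioo (a := -R) (b := R))
    (fun k x _ => (hasDerivAt_pow k x).div_const _)
    (fun k x hx => norm_natCast_mul_pow_pred_div_le hR (abs_le.2 ⟨hx.1.le, hx.2.le⟩) m k)
    (y₀ := 0) (y := y) (by constructor <;> linarith) (hasSum_besselSeries m 0).summable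
    (by constructor <;> linarith [neg_abs_le y, le_abs_self y])
  refine hderiv.congr_deriv ?_
  have hsum : Summable fun k => k * y ^ (k - 1) / (k ! * (k + m)! : ℝ) :=
    .of_norm_bounded (Real.summable_pow_div_factorial (2 * R))
      (norm_natCast_mul_pow_pred_div_le hR (by simp [R]) m)
  rw [hsum.tsum_eq_zero_add, besselSeries]
  simp only [Nat.cast_zero, zero_mul, zero_div, zero_add]
  congr 1
  ext k
  simp only [Nat.add_sub_cancel, Nat.factorial_succ, show k + 1 + m = k + (m + 1) by ring]
  push_cast
  field_simp

theorem besselSeries_recurrence (m : ℕ) (y : ℝ) :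
    y * besselSeries (m + 2) y + (m + 1) * besselSeries (m + 1) y = besselSeries m y := by
  have tail (n : ℕ) := (hasSum_nat_add_iff' 1).2 (hasSum_besselSeries n y)
  have hsum := ((hasSum_besselSeries (m + 2) y).mul_left y).add
    ((tail (m + 1)).mul_left ((m : ℝ) + 1))
  have hterm : (fun k : ℕ => y * (y ^ k / (k ! * (k + (m + 2))! : ℝ)) +
      (m + 1) * (y ^ (k + 1) / ((k + 1)! * (k + 1 + (m + 1))! : ℝ))) =
      fun k => y ^ (k + 1) / ((k + 1)! * (k + 1 + m)! : ℝ) := by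
    ext k
    simp only [Nat.factorial_succ, show k + 1 + (m + 1) = k + m + 2 by ring,
      show k + 1 + m = k + m + 1 by ring, show k + (m + 2) = k + m + 2 by ring, pow_succ]
    push_cast
    field_simp
    ring
  rw [hterm] at hsum
  have h := hsum.unique (tail m)
  simp only [Finset.sum_range_one, pow_zero, Nat.factorial_zero, zero_add, Nat.cast_one,
    one_mul, Nat.factorial_succ m] at h
  push_cast at h
  field_simp at h
  refine mul_right_cancel₀ (Nat.cast_ne_zero.2 m.factorial_ne_zero : (m ! : ℝ) ≠ 0) ?_
  linarith

theorem two_mul_cosh_sub_one_le_sq_mul_besselSeries (z : ℝ) :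
    2 * (cosh z - 1) ≤ z ^ 2 * besselSeries 1 (z ^ 2 / 4) := by
  have hcosh := ((hasSum_nat_add_iff' 1).2 (Real.hasSum_cosh z)).mul_left 2
  simp only [Finset.sum_range_one, mul_zero, pow_zero, Nat.factorial_zero, Nat.cast_one,
    div_one] at hcosh
  refine hasSum_le (fun k => ?_) hcosh ((hasSum_besselSeries 1 (z ^ 2 / 4)).mul_left (z ^ 2))
  have hz : 0 ≤ z ^ (2 * k + 2) := Even.pow_nonneg ⟨k + 1, by ring⟩ z
  have hfac : (2 * 4 ^ k * k ! * (k + 1)! : ℝ) ≤ (2 * k + 2)! := by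
    exact_mod_cast Nat.two_mul_four_pow_mul_factorial_mul_factorial_succ_le k
  calc 2 * (z ^ (2 * (k + 1)) / (2 * (k + 1))!)
      = z ^ (2 * k + 2) / ((2 * k + 2)! / 2) := by rw [show 2 * (k + 1) = 2 * k + 2 by ring]; ring
    _ ≤ z ^ (2 * k + 2) / (4 ^ k * k ! * (k + 1)!) := by
      gcongr
      linarith
    _ = z ^ 2 * ((z ^ 2 / 4) ^ k / (k ! * (k + 1)!)) := by
      rw [div_pow, ← pow_mul]; ring

/-- The scalar NAGD mode `f(t) = 2 I₁(√c t) / (√c t)`, solving `f'' + (3/t) f' = c f`. -/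
noncomputable def nagdMode (c t : ℝ) : ℝ := besselSeries 1 (c * t ^ 2 / 4)

noncomputable def nagdModeDeriv (c t : ℝ) : ℝ := c * t / 2 * besselSeries 2 (c * t ^ 2 / 4)

lemma hasDerivAt_quadratic (c t : ℝ) : HasDerivAt (fun t => c * t ^ 2 / 4) (c * t / 2) t :=
  (((hasDerivAt_pow 2 t).const_mul c).div_const 4).congr_deriv (by norm_num; ring)

theorem hasDerivAt_nagdMode (c t : ℝ) : HasDerivAt (nagdMode c) (nagdModeDeriv c t) t :=
  ((hasDerivAt_besselSeries 1 _).comp t (hasDerivAt_quadratic c t)).congr_deriv (mul_comm _ _)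

theorem hasDerivAt_nagdModeDeriv (c : ℝ) {t : ℝ} (ht : t ≠ 0) :
    HasDerivAt (nagdModeDeriv c) (-(3 / t) * nagdModeDeriv c t + c * nagdMode c t) t := by
  have hlin : HasDerivAt (fun t => c * t / 2) (c / 2) t := by
    simpa using ((hasDerivAt_id t).const_mul c).div_const 2
  refine (hlin.mul ((hasDerivAt_besselSeries 2 _).comp t (hasDerivAt_quadratic c t))).congr_deriv ?_
  rw [Function.comp_apply, nagdModeDeriv, nagdMode, ← besselSeries_recurrence 1]
  field_simp
  push_cast
  ring

theorem exp_sub_two_le_mul_nagdMode {c : ℝ} (hc : 0 ≤ c) (t : ℝ) :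
    exp (√c * t) - 2 ≤ c * t ^ 2 * nagdMode c t := by
  have hsq : (√c * t) ^ 2 = c * t ^ 2 := by rw [mul_pow, sq_sqrt hc]
  have h := two_mul_cosh_sub_one_le_sq_mul_besselSeries (√c * t)
  rw [hsq, cosh_eq] at h
  rw [nagdMode]
  linarith [exp_pos (-(√c * t))]

theorem tendsto_exp_mul_nagdMode {c μ : ℝ} (hc : 0 < c) (hμ : μ < √c) :
    Tendsto (fun t => exp (-μ * t) * nagdMode c t) atTop atTop := by
  have hlim := (tendsto_exp_mul_div_rpow_atTop 2 _ (sub_pos.2 hμ)).atTop_div_const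
    (by positivity : 0 < 2 * c)
  have hexp : ∀ᶠ t in atTop, 4 ≤ exp (√c * t) :=
    (tendsto_exp_atTop.comp (tendsto_id.const_mul_atTop (sqrt_pos.2 hc))).eventually_ge_atTop 4
  refine tendsto_atTop_mono' _ ?_ hlim
  filter_upwards [eventually_gt_atTop 0, hexp] with t ht h4
  have hlow := exp_sub_two_le_mul_nagdMode hc.le t
  rw [rpow_two, sub_mul, exp_sub, div_div, div_le_iff₀ (by positivity)]
  rw [div_eq_mul_inv, ← exp_neg, ← neg_mul, mul_comm (exp _)]
  calc exp (-μ * t) * exp (√c * t) ≤ exp (-μ * t) * (2 * (c * t ^ 2 * nagdMode c t)) := by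
        gcongr; linarith
    _ = exp (-μ * t) * nagdMode c t * (t ^ 2 * (2 * c)) := by ring

lemma e2norm_eq_norm {N : ℕ} (x : Fin N → ℝ) :
    e2norm x = ‖(WithLp.toLp 2 x : EuclideanSpace ℝ (Fin N))‖ := by
  simp [e2norm, EuclideanSpace.norm_eq]

lemma e2norm_smul {N : ℕ} (s : ℝ) (x : Fin N → ℝ) : e2norm (s • x) = |s| * e2norm x := by
  simp [e2norm_eq_norm, WithLp.toLp_smul, norm_smul]

lemma e2norm_pos {N : ℕ} {x : Fin N → ℝ} (hx : x ≠ 0) : 0 < e2norm x := by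
  simpa [e2norm_eq_norm] using hx

theorem isNAGDTrajectory_smul_eigenvector {N : ℕ} {G : Matrix (Fin N) (Fin N) ℝ} {lam : ℝ}
    {u : Fin N → ℝ} (heig : G.mulVec u = lam • u) {t₀ : ℝ} {f f' : ℝ → ℝ}
    (hf : ∀ t, t₀ ≤ t → HasDerivAt f (f' t) t)
    (hf' : ∀ t, t₀ ≤ t → HasDerivAt f' (-(3 / t) * f' t - lam * f t) t) :
    IsNAGDTrajectory G t₀ (fun t => f t • u) (fun t => f' t • u) := by
  refine ⟨fun t ht => (hf t ht).smul_const u, fun t ht => (hf' t ht).smul_const u |>.congr_deriv ?_⟩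
  rw [Matrix.mulVec_smul, heig, smul_smul, smul_smul, sub_smul, mul_comm lam]

theorem stmt_8_general {N : ℕ} (G : Matrix (Fin N) (Fin N) ℝ)
    (lam : ℝ) (hlam : lam < 0) (u : Fin N → ℝ) (hu : u ≠ 0)
    (heig : G.mulVec u = lam • u)
    (t₀ : ℝ) (ht₀ : 0 < t₀) :
    ∀ δ : ℝ, 0 < δ → ∃ q v : ℝ → Fin N → ℝ,
      IsNAGDTrajectory G t₀ q v ∧
      e2norm (q t₀) + e2norm (v t₀) < δ ∧
      ∀ μ' : ℝ, μ' < Real.sqrt (-lam) →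
        Tendsto (fun t => Real.exp (-μ' * t) * e2norm (q t)) atTop atTop := by
  intro δ hδ
  have hc : 0 < -lam := neg_pos.2 hlam
  set K := (|nagdMode (-lam) t₀| + |nagdModeDeriv (-lam) t₀|) * e2norm u
  have hK : 0 ≤ K := mul_nonneg (by positivity) (e2norm_pos hu).le
  set ε := δ / (K + 1)
  have hε : 0 < ε := by positivity
  refine ⟨fun t => (ε * nagdMode (-lam) t) • u, fun t => (ε * nagdModeDeriv (-lam) t) • u,
    isNAGDTrajectory_smul_eigenvector heig (fun t _ => (hasDerivAt_nagdMode _ t).const_mul ε)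
      fun t ht => ((hasDerivAt_nagdModeDeriv _ (ht₀.trans_le ht).ne').const_mul ε).congr_deriv
        (by ring), ?_, fun μ hμ => ?_⟩
  · simp only [e2norm_smul, abs_mul, abs_of_pos hε]
    calc ε * |nagdMode (-lam) t₀| * e2norm u + ε * |nagdModeDeriv (-lam) t₀| * e2norm u
        = ε * K := by ring
      _ < ε * (K + 1) := mul_lt_mul_of_pos_left (lt_add_one K) hε
      _ = δ := div_mul_cancel₀ δ (by positivity)
  · refine tendsto_atTop_mono (fun t => ?_)
      ((tendsto_exp_mul_nagdMode hc hμ).const_mul_atTop (mul_pos hε (e2norm_pos hu)))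
    rw [e2norm_smul]
    calc ε * e2norm u * (exp (-μ * t) * nagdMode (-lam) t)
        = exp (-μ * t) * (ε * nagdMode (-lam) t * e2norm u) := by ring
      _ ≤ exp (-μ * t) * (|ε * nagdMode (-lam) t| * e2norm u) :=
        mul_le_mul_of_nonneg_left (mul_le_mul_of_nonneg_right (le_abs_self _) (e2norm_pos hu).le)
          (exp_pos _).le

/-- if `G` is symmetric with a real eigenvalue `lam < 0` (eigenvector `u`),
then for every `δ > 0` there is an NAGD trajectory with initial data of size `< δ` whose
Euclidean norm blows up exponentially at rate `√(-lam)`: `e^{-μ' t} ‖q(t)‖₂ → ∞`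
for every `μ' < √(-lam)`. -/
theorem stmt_8 {N : ℕ} (G : Matrix (Fin N) (Fin N) ℝ) (hsymm : G.transpose = G)
    (lam : ℝ) (hlam : lam < 0) (u : Fin N → ℝ) (hu : u ≠ 0)
    (heig : G.mulVec u = lam • u)
    (t₀ : ℝ) (ht₀ : 0 < t₀) :
    ∀ δ : ℝ, 0 < δ → ∃ q v : ℝ → Fin N → ℝ,
      IsNAGDTrajectory G t₀ q v ∧
      e2norm (q t₀) + e2norm (v t₀) < δ ∧
      ∀ μ' : ℝ, μ' < Real.sqrt (-lam) →
        Tendsto (fun t => Real.exp (-μ' * t) * e2norm (q t)) atTop atTop :=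
  stmt_8_general G lam hlam u hu heig t₀ ht₀
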